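/- Let W > 0, let σ, κ : ℝ → ℝ be continuous on [0,W], and let a, b, E ∈ ℝ. Suppose (φe¹, φl¹) and (φe², φl²) are both solutions of the 1D coupled porous-electrode system on [0,W] whose Neumann data agree at both endpoints (σ(0)·(φe¹)'(0) = σ(0)·(φe²)'(0), σ(W)·(φe¹)'(W) = σ(W)·(φe²)'(W), κ(0)·(φl¹)'(0) = κ(0)·(φl²)'(0), κ(W)·(φl¹)'(W) = κ(W)·(φl²)'(W)). Set ξe = φe¹ − φe², ξl = φl¹ − φl², η¹ = φe¹ − φl¹ − E, η² = φe² − φl² − E. Then ∫₀^W σ(x)·(ξe'(x))² dx + ∫₀^W κ(x)·(ξl'(x))² dx = −∫₀^W (a·sinh(b·η¹(x)) − a·sinh(b·η²(x)))·(η¹(x) − η²(x)) dx. -/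

import Mathlib

/-!
Subtracting the equations for the two solutions, the flux differences `σ ξe'` and `κ ξl'` vanish
at both endpoints and have derivatives `±(f(η¹) − f(η²))` with `f(t) = a sinh(b t)`. Integrating
each against `ξe`, resp. `ξl`, by parts leaves no boundary term, and since `ξe − ξl = η¹ − η²`
the two source terms add up to the right-hand side.
-/

open Set

noncomputable section

/-- `(φe, φl)` is a solution of the 1D coupled porous-electrode system on `[0, W]`. -/
def IsSolution1D (W : ℝ) (σ κ : ℝ → ℝ) (a b E : ℝ) (φe φl : ℝ → ℝ) : Prop :=
  ContDiffOn ℝ 1 φe (Icc 0 W) ∧ ContDiffOn ℝ 1 φl (Icc 0 W) ∧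
  ContDiffOn ℝ 1 (fun x => σ x * deriv φe x) (Icc 0 W) ∧
  ContDiffOn ℝ 1 (fun x => κ x * deriv φl x) (Icc 0 W) ∧
  (∀ x ∈ Icc 0 W, deriv (fun y => σ y * deriv φe y) x
      = a * Real.sinh (b * (φe x - φl x - E))) ∧
  (∀ x ∈ Icc 0 W, deriv (fun y => κ y * deriv φl y) x
      = -(a * Real.sinh (b * (φe x - φl x - E))))

theorem eqOn_derivWithin_Icc_deriv (f : ℝ → ℝ) (a b : ℝ) :
    EqOn (derivWithin f (Icc a b)) (deriv f) (Ioo a b) :=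
  fun _ hx => derivWithin_of_mem_nhds (Icc_mem_nhds hx.1 hx.2)

theorem ContDiffOn.hasDerivAt_of_mem_Ioo {f : ℝ → ℝ} {a b x : ℝ}
    (hf : ContDiffOn ℝ 1 f (Icc a b)) (hx : x ∈ Ioo a b) : HasDerivAt f (deriv f x) x :=
  ((hf.differentiableOn one_ne_zero x (Ioo_subset_Icc_self hx)).differentiableAt
    (Icc_mem_nhds hx.1 hx.2)).hasDerivAt

theorem ContDiffOn.deriv_sub_of_mem_Ioo {f g : ℝ → ℝ} {a b x : ℝ}
    (hf : ContDiffOn ℝ 1 f (Icc a b)) (hg : ContDiffOn ℝ 1 g (Icc a b)) (hx : x ∈ Ioo a b) :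
    deriv (fun y => f y - g y) x = deriv f x - deriv g x :=
  ((hf.hasDerivAt_of_mem_Ioo hx).sub (hg.hasDerivAt_of_mem_Ioo hx)).deriv

theorem integral_mul_deriv_eq_neg_integral_deriv_mul {a b : ℝ} (hab : a < b) {u v : ℝ → ℝ}
    (hu : ContDiffOn ℝ 1 u (Icc a b)) (hv : ContDiffOn ℝ 1 v (Icc a b))
    (ha : u a = 0) (hb : u b = 0) :
    ∫ x in a..b, u x * deriv v x = -∫ x in a..b, deriv u x * v x := by
  have hI : uIcc a b = Icc a b := uIcc_of_le hab.le
  have hud : UniqueDiffOn ℝ (Icc a b) := uniqueDiffOn_Icc hab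
  have hderiv {f : ℝ → ℝ} (hf : ContDiffOn ℝ 1 f (Icc a b)) :
      ∀ x ∈ uIcc a b, HasDerivWithinAt f (derivWithin f (Icc a b) x) (uIcc a b) x := fun x hx =>
    hI ▸ ((hf.differentiableOn one_ne_zero) x (hI ▸ hx)).hasDerivWithinAt
  have hint {f : ℝ → ℝ} (hf : ContDiffOn ℝ 1 f (Icc a b)) :
      IntervalIntegrable (derivWithin f (Icc a b)) MeasureTheory.volume a b :=
    (hf.continuousOn_derivWithin hud le_rfl).intervalIntegrable_of_Icc hab.le
  have ibp := intervalIntegral.integral_mul_deriv_eq_deriv_mul_of_hasDerivWithinAt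
    (hderiv hu) (hderiv hv) (hint hu) (hint hv)
  rw [ha, hb, zero_mul, zero_mul, sub_zero, zero_sub] at ibp
  calc ∫ x in a..b, u x * deriv v x
      = ∫ x in a..b, u x * derivWithin v (Icc a b) x :=
        intervalIntegral.integral_congr_Ioo_of_le hab.le fun x hx => by
          rw [eqOn_derivWithin_Icc_deriv v a b hx]
    _ = -∫ x in a..b, derivWithin u (Icc a b) x * v x := ibp
    _ = -∫ x in a..b, deriv u x * v x := by
        rw [intervalIntegral.integral_congr_Ioo_of_le hab.le fun x hx => by
          rw [eqOn_derivWithin_Icc_deriv u a b hx]]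

theorem integral_mul_sq_deriv_sub_eq_of_flux_eq {a b : ℝ} (hab : a < b) {σ φ₁ φ₂ : ℝ → ℝ}
    (hφ₁ : ContDiffOn ℝ 1 φ₁ (Icc a b)) (hφ₂ : ContDiffOn ℝ 1 φ₂ (Icc a b))
    (hJ₁ : ContDiffOn ℝ 1 (fun x => σ x * deriv φ₁ x) (Icc a b))
    (hJ₂ : ContDiffOn ℝ 1 (fun x => σ x * deriv φ₂ x) (Icc a b))
    (ha : σ a * deriv φ₁ a = σ a * deriv φ₂ a) (hb : σ b * deriv φ₁ b = σ b * deriv φ₂ b) :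
    ∫ x in a..b, σ x * deriv (fun y => φ₁ y - φ₂ y) x ^ 2
      = -∫ x in a..b, (deriv (fun y => σ y * deriv φ₁ y) x
          - deriv (fun y => σ y * deriv φ₂ y) x) * (φ₁ x - φ₂ x) := by
  have ibp := integral_mul_deriv_eq_neg_integral_deriv_mul hab (hJ₁.sub hJ₂) (hφ₁.sub hφ₂)
    (sub_eq_zero.2 ha) (sub_eq_zero.2 hb)
  calc ∫ x in a..b, σ x * deriv (fun y => φ₁ y - φ₂ y) x ^ 2
      = ∫ x in a..b, (σ x * deriv φ₁ x - σ x * deriv φ₂ x) * deriv (fun y => φ₁ y - φ₂ y) x :=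
        intervalIntegral.integral_congr_Ioo_of_le hab.le fun x hx => by
          simp only [hφ₁.deriv_sub_of_mem_Ioo hφ₂ hx]; ring
    _ = _ := by
        rw [ibp]
        congr 1
        exact intervalIntegral.integral_congr_Ioo_of_le hab.le fun x hx => by
          simp only [hJ₁.deriv_sub_of_mem_Ioo hJ₂ hx]

theorem energy_identity_for_difference_general
    (W : ℝ) (hW : 0 < W) (σ κ : ℝ → ℝ)
    (a b E : ℝ)
    (φe₁ φl₁ φe₂ φl₂ : ℝ → ℝ)
    (h₁ : IsSolution1D W σ κ a b E φe₁ φl₁)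
    (h₂ : IsSolution1D W σ κ a b E φe₂ φl₂)
    (hbc₁ : σ 0 * deriv φe₁ 0 = σ 0 * deriv φe₂ 0)
    (hbc₂ : σ W * deriv φe₁ W = σ W * deriv φe₂ W)
    (hbc₃ : κ 0 * deriv φl₁ 0 = κ 0 * deriv φl₂ 0)
    (hbc₄ : κ W * deriv φl₁ W = κ W * deriv φl₂ W) :
    (∫ x in (0:ℝ)..W, σ x * (deriv (fun y => φe₁ y - φe₂ y) x) ^ 2)
      + (∫ x in (0:ℝ)..W, κ x * (deriv (fun y => φl₁ y - φl₂ y) x) ^ 2)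
    = -∫ x in (0:ℝ)..W,
        (a * Real.sinh (b * (φe₁ x - φl₁ x - E))
          - a * Real.sinh (b * (φe₂ x - φl₂ x - E)))
        * ((φe₁ x - φl₁ x - E) - (φe₂ x - φl₂ x - E)) := by
  obtain ⟨he₁, hl₁, hJe₁, hJl₁, hσ₁, hκ₁⟩ := h₁
  obtain ⟨he₂, hl₂, hJe₂, hJl₂, hσ₂, hκ₂⟩ := h₂
  set R : ℝ → ℝ := fun x => a * Real.sinh (b * (φe₁ x - φl₁ x - E))
    - a * Real.sinh (b * (φe₂ x - φl₂ x - E))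
  have hR : ContinuousOn R (Icc 0 W) := by
    have := he₁.continuousOn; have := he₂.continuousOn
    have := hl₁.continuousOn; have := hl₂.continuousOn
    fun_prop
  have hint {φ₁ φ₂ : ℝ → ℝ} (h₁ : ContDiffOn ℝ 1 φ₁ (Icc 0 W))
      (h₂ : ContDiffOn ℝ 1 φ₂ (Icc 0 W)) :
      IntervalIntegrable (fun x => R x * (φ₁ x - φ₂ x)) MeasureTheory.volume 0 W :=
    (hR.mul (h₁.continuousOn.sub h₂.continuousOn)).intervalIntegrable_of_Icc hW.le
  have he : ∫ x in (0:ℝ)..W, (deriv (fun y => σ y * deriv φe₁ y) x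
      - deriv (fun y => σ y * deriv φe₂ y) x) * (φe₁ x - φe₂ x)
      = ∫ x in (0:ℝ)..W, R x * (φe₁ x - φe₂ x) :=
    intervalIntegral.integral_congr fun x hx => by
      rw [uIcc_of_le hW.le] at hx
      simp only [hσ₁ x hx, hσ₂ x hx, R]
  have hl : ∫ x in (0:ℝ)..W, (deriv (fun y => κ y * deriv φl₁ y) x
      - deriv (fun y => κ y * deriv φl₂ y) x) * (φl₁ x - φl₂ x)
      = -∫ x in (0:ℝ)..W, R x * (φl₁ x - φl₂ x) := by
    rw [← intervalIntegral.integral_neg]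
    exact intervalIntegral.integral_congr fun x hx => by
      rw [uIcc_of_le hW.le] at hx
      simp only [hκ₁ x hx, hκ₂ x hx, R]
      ring
  rw [integral_mul_sq_deriv_sub_eq_of_flux_eq hW he₁ he₂ hJe₁ hJe₂ hbc₁ hbc₂,
    integral_mul_sq_deriv_sub_eq_of_flux_eq hW hl₁ hl₂ hJl₁ hJl₂ hbc₃ hbc₄, he, hl, neg_neg,
    neg_add_eq_sub, ← intervalIntegral.integral_sub (hint hl₁ hl₂) (hint he₁ he₂),
    ← intervalIntegral.integral_neg]
  exact intervalIntegral.integral_congr fun x _ => by simp only [R]; ring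

/-- The energy identity for the difference of two solutions with the same Neumann data:
`∫ σ (ξe')² + ∫ κ (ξl')² = −∫ (f(η¹) − f(η²))(η¹ − η²)` with `f(t) = a·sinh(b·t)`. -/
theorem energy_identity_for_difference
    (W : ℝ) (hW : 0 < W) (σ κ : ℝ → ℝ)
    (hσc : ContinuousOn σ (Icc 0 W)) (hκc : ContinuousOn κ (Icc 0 W))
    (a b E : ℝ)
    (φe₁ φl₁ φe₂ φl₂ : ℝ → ℝ)
    (h₁ : IsSolution1D W σ κ a b E φe₁ φl₁)
    (h₂ : IsSolution1D W σ κ a b E φe₂ φl₂)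
    (hbc₁ : σ 0 * deriv φe₁ 0 = σ 0 * deriv φe₂ 0)
    (hbc₂ : σ W * deriv φe₁ W = σ W * deriv φe₂ W)
    (hbc₃ : κ 0 * deriv φl₁ 0 = κ 0 * deriv φl₂ 0)
    (hbc₄ : κ W * deriv φl₁ W = κ W * deriv φl₂ W) :
    (∫ x in (0:ℝ)..W, σ x * (deriv (fun y => φe₁ y - φe₂ y) x) ^ 2)
      + (∫ x in (0:ℝ)..W, κ x * (deriv (fun y => φl₁ y - φl₂ y) x) ^ 2)
    = -∫ x in (0:ℝ)..W,
        (a * Real.sinh (b * (φe₁ x - φl₁ x - E))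
          - a * Real.sinh (b * (φe₂ x - φl₂ x - E)))
        * ((φe₁ x - φl₁ x - E) - (φe₂ x - φl₂ x - E)) :=
  energy_identity_for_difference_general W hW σ κ a b E φe₁ φl₁ φe₂ φl₂ h₁ h₂ hbc₁ hbc₂ hbc₃ hbc₄
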